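/- arXiv:1407.7402 — 2 statements merged into one kernel-verified Lean document; each statement's English description precedes it below -/
import Mathlib

section
/- Let Ω ∈ R^{p×d} be an analysis operator, g ∈ R^d a standard Gaussian random vector, and x ∈ R^d. Then inf_{t ≥ 0} E[dist(g, t·∂‖Ω·‖₁(x))²] ≤ d − ℓ(∂‖Ω·‖₁(x))² / max_{‖z‖₂ ≤ 1} ‖Ωz‖₁², where ℓ(T) = E sup_{w∈T} ⟨g, w⟩ is the Gaussian width and dist(x,T) = inf{‖x−u‖₂ : u ∈ T}. -/
open MeasureTheory ProbabilityTheory Real Finset Pointwise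
noncomputable section
/-- Euclidean inner product. -/
def ip {ι : Type*} [Fintype ι] (u v : ι → ℝ) : ℝ := ∑ i, u i * v i
/-- ℓ1 norm. -/
def l1 {ι : Type*} [Fintype ι] (v : ι → ℝ) : ℝ := ∑ i, |v i|
/-- Euclidean (ℓ2) norm. -/
def l2 {ι : Type*} [Fintype ι] (v : ι → ℝ) : ℝ := Real.sqrt (∑ i, v i ^ 2)
/-- Standard Gaussian measure on ι → ℝ. -/
def stdGaussian (ι : Type*) [Fintype ι] : Measure (ι → ℝ) :=
  Measure.pi fun _ => gaussianReal 0 1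
/-- Matrix-vector product, matrix given by its rows. -/
def amul {ι κ : Type*} [Fintype ι] [Fintype κ] (Ω : ι → κ → ℝ) (z : κ → ℝ) : ι → ℝ :=
  fun i => ip (Ω i) z
/-- Transposed matrix-vector product. -/
def atmul {ι κ : Type*} [Fintype ι] [Fintype κ] (Ω : ι → κ → ℝ) (α : ι → ℝ) : κ → ℝ :=
  fun j => ∑ i, α i * Ω i j
/-- Gaussian width of a set. -/
def gaussWidth {ι : Type*} [Fintype ι] (S : Set (ι → ℝ)) : ℝ :=
  ∫ g, sSup ((fun w => ip g w) '' S) ∂stdGaussian ι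
/-- Euclidean distance from a point to a set. -/
def distTo {ι : Type*} [Fintype ι] (g : ι → ℝ) (S : Set (ι → ℝ)) : ℝ :=
  sInf ((fun u => l2 (g - u)) '' S)
/-- max of ‖Ωz‖₁ over the Euclidean unit ball. -/
def maxL1 {ι κ : Type*} [Fintype ι] [Fintype κ] (Ω : ι → κ → ℝ) : ℝ :=
  sSup ((fun z => l1 (amul Ω z)) '' {z | l2 z ≤ 1})
/-- Subdifferential of f at x. -/
def subdiffAt {ι : Type*} [Fintype ι] (f : (ι → ℝ) → ℝ) (x : ι → ℝ) : Set (ι → ℝ) :=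
  {v | ∀ z, f x + ip (z - x) v ≤ f z}
/-- Tangent (descent) cone of ‖Ω·‖₁ at x. -/
def tangentCone {ι κ : Type*} [Fintype ι] [Fintype κ] (Ω : ι → κ → ℝ) (x : κ → ℝ) :
    Set (κ → ℝ) :=
  {v | ∃ (t : ℝ) (z : κ → ℝ), 0 ≤ t ∧ l1 (amul Ω z) ≤ l1 (amul Ω x) ∧ v = t • (z - x)}

open scoped NNReal ENNReal

section gaussAux
open Set

lemma pdf01 (x : ℝ) : gaussianPDFReal 0 1 x = (√(2 * π))⁻¹ * rexp (-(1/2) * x ^ 2) := by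
  simp only [gaussianPDFReal, NNReal.coe_one, mul_one, sub_zero]
  congr 1
  ring

lemma gauss_integral_eq (f : ℝ → ℝ) :
    ∫ x, f x ∂gaussianReal 0 1 = ∫ x, gaussianPDFReal 0 1 x * f x := by
  rw [gaussianReal_of_var_ne_zero 0 one_ne_zero]
  have h : gaussianPDF 0 1 = fun x => ((Real.toNNReal (gaussianPDFReal 0 1 x) : ℝ≥0) : ℝ≥0∞) :=
    rfl
  rw [h, integral_withDensity_eq_integral_smul
    ((measurable_gaussianPDFReal 0 1).real_toNNReal) f]
  congr 1
  ext x
  simp [NNReal.smul_def, Real.coe_toNNReal _ (gaussianPDFReal_nonneg 0 1 x)]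

lemma gauss_integrable (f : ℝ → ℝ)
    (h : Integrable (fun x => f x * gaussianPDFReal 0 1 x) volume) :
    Integrable f (gaussianReal 0 1) := by
  rw [gaussianReal_of_var_ne_zero 0 one_ne_zero,
    integrable_withDensity_iff (measurable_gaussianPDF 0 1)
      (ae_of_all _ fun x => ENNReal.ofReal_lt_top)]
  have : (fun x => f x * (gaussianPDF 0 1 x).toReal)
      = fun x => f x * gaussianPDFReal 0 1 x := by
    ext x
    rw [gaussianPDF, ENNReal.toReal_ofReal (gaussianPDFReal_nonneg 0 1 x)]
  rw [this]
  exact h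

lemma integrable_id_gauss : Integrable (fun x : ℝ => x) (gaussianReal 0 1) := by
  refine gauss_integrable _ ?_
  have h := (integrable_mul_exp_neg_mul_sq (b := 1/2) (by norm_num)).const_mul (√(2 * π))⁻¹
  refine h.congr (ae_of_all _ fun x => ?_)
  simp only [pdf01]; ring

lemma integrable_sq_gauss : Integrable (fun x : ℝ => x ^ 2) (gaussianReal 0 1) := by
  refine gauss_integrable _ ?_
  have h := (integrable_rpow_mul_exp_neg_mul_sq (b := 1/2) (by norm_num)
    (s := 2) (by norm_num)).const_mul (√(2 * π))⁻¹
  refine h.congr (ae_of_all _ fun x => ?_)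
  simp only [pdf01, show ((2:ℝ)) = ((2:ℕ):ℝ) by norm_num, Real.rpow_natCast]
  push_cast
  ring

lemma integral_id_gauss : ∫ x, x ∂gaussianReal 0 1 = 0 := by
  rw [gauss_integral_eq]
  have hodd : ∀ x : ℝ, gaussianPDFReal 0 1 (-x) * (-x) = -(gaussianPDFReal 0 1 x * x) := by
    intro x
    rw [pdf01, pdf01]
    ring_nf
  have key : (∫ x, gaussianPDFReal 0 1 x * x)
      = - ∫ x, gaussianPDFReal 0 1 x * x := by
    conv_lhs => rw [← integral_neg_eq_self (fun x => gaussianPDFReal 0 1 x * x) volume]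
    simp_rw [hodd]
    exact integral_neg _
  linarith

lemma integral_sq_exp_Ioi : ∫ x in Ioi (0:ℝ), x ^ 2 * rexp (-(1/2) * x ^ 2)
    = √(2 * π) / 2 := by
  have h := integral_rpow_mul_exp_neg_mul_rpow (p := 2) (q := 2) (b := 1/2)
    (by norm_num) (by norm_num) (by norm_num)
  have e : ∀ x ∈ Ioi (0:ℝ), x ^ (2:ℝ) * rexp (-(1/2) * x ^ (2:ℝ))
      = x ^ 2 * rexp (-(1/2) * x ^ 2) := by
    intro x _
    rw [show ((2:ℝ)) = ((2:ℕ):ℝ) by norm_num, Real.rpow_natCast]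
  rw [setIntegral_congr_fun measurableSet_Ioi e] at h
  rw [h]
  have hg : Real.Gamma ((2 + 1) / 2) = √π / 2 := by
    rw [show ((2:ℝ) + 1) / 2 = 1/2 + 1 by norm_num, Real.Gamma_add_one (by norm_num),
      Real.Gamma_one_half_eq]
    ring
  rw [hg]
  have hb : ((1:ℝ)/2) ^ (-((2:ℝ) + 1) / 2) = 2 ^ ((3:ℝ)/2) := by
    rw [show ((1:ℝ)/2) = 2⁻¹ by norm_num, Real.inv_rpow (by norm_num),
      ← Real.rpow_neg (by norm_num)]
    norm_num
  rw [hb]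
  have h32 : (2:ℝ) ^ ((3:ℝ)/2) = 2 * √2 := by
    rw [show ((3:ℝ)/2) = 1 + 1/2 by norm_num, Real.rpow_add (by norm_num),
      Real.rpow_one, ← Real.sqrt_eq_rpow]
  rw [h32, Real.sqrt_mul (by norm_num)]
  ring

lemma integrable_sq_exp : Integrable (fun x : ℝ => x ^ 2 * rexp (-(1/2) * x ^ 2)) volume := by
  have h := integrable_rpow_mul_exp_neg_mul_sq (b := 1/2) (by norm_num) (s := 2) (by norm_num)
  refine h.congr (ae_of_all _ fun x => ?_)
  simp only [show ((2:ℝ)) = ((2:ℕ):ℝ) by norm_num, Real.rpow_natCast]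

lemma integral_sq_exp_real : ∫ x : ℝ, x ^ 2 * rexp (-(1/2) * x ^ 2) = √(2 * π) := by
  have hsplit := intervalIntegral.integral_Iic_add_Ioi (b := (0:ℝ)) (μ := volume)
    integrable_sq_exp.integrableOn integrable_sq_exp.integrableOn
  have heven : (∫ x in Iic (0:ℝ), x ^ 2 * rexp (-(1/2) * x ^ 2))
      = ∫ x in Ioi (0:ℝ), x ^ 2 * rexp (-(1/2) * x ^ 2) := by
    have h := integral_comp_neg_Iic (0:ℝ) (fun x => x ^ 2 * rexp (-(1/2) * x ^ 2))
    simp only [neg_zero] at h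
    rw [← h]
    refine setIntegral_congr_fun measurableSet_Iic fun x _ => ?_
    ring_nf
  rw [← hsplit, heven, integral_sq_exp_Ioi]
  ring

lemma integral_sq_gauss : ∫ x, x ^ 2 ∂gaussianReal 0 1 = 1 := by
  rw [gauss_integral_eq]
  have : (fun x => gaussianPDFReal 0 1 x * x ^ 2)
      = fun x => (√(2 * π))⁻¹ * (x ^ 2 * rexp (-(1/2) * x ^ 2)) := by
    ext x; rw [pdf01]; ring
  rw [this, integral_const_mul, integral_sq_exp_real, inv_mul_cancel₀]
  positivity

end gaussAux

section vecAux
variable {d : ℕ}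
variable {d : ℕ}

lemma l2_nonneg (v : Fin d → ℝ) : 0 ≤ l2 v := Real.sqrt_nonneg _

lemma l2_sq (v : Fin d → ℝ) : l2 v ^ 2 = ∑ i, v i ^ 2 :=
  Real.sq_sqrt (Finset.sum_nonneg fun i _ => sq_nonneg _)

lemma abs_le_l2 (v : Fin d → ℝ) (i : Fin d) : |v i| ≤ l2 v := by
  rw [l2, ← Real.sqrt_sq_eq_abs]
  exact Real.sqrt_le_sqrt (Finset.single_le_sum (fun j _ => sq_nonneg (v j)) (Finset.mem_univ i))

lemma ip_le_l2 (u v : Fin d → ℝ) : ip u v ≤ l2 u * l2 v := by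
  rw [ip, l2, l2, ← Real.sqrt_mul (Finset.sum_nonneg fun i _ => sq_nonneg _)]
  refine le_trans (le_abs_self _) ?_
  rw [← Real.sqrt_sq_eq_abs]
  exact Real.sqrt_le_sqrt (Finset.sum_mul_sq_le_sq_mul_sq _ _ _)

lemma neg_l2_le_ip (u v : Fin d → ℝ) : -(l2 u * l2 v) ≤ ip u v := by
  have h := ip_le_l2 (-u) v
  have h1 : ip (-u) v = -ip u v := by
    simp [ip]
  have h2 : l2 (-u) = l2 u := by
    simp [l2]
  rw [h1, h2] at h
  linarith

lemma l2_eq_zero {v : Fin d → ℝ} (h : l2 v ≤ 0) : v = 0 := by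
  have h1 : Real.sqrt (∑ i, v i ^ 2) = 0 := le_antisymm h (Real.sqrt_nonneg _)
  have hs : ∑ i, v i ^ 2 ≤ 0 := by
    by_contra hc
    push_neg at hc
    exact absurd h1 (ne_of_gt (Real.sqrt_pos.mpr hc))
  have h2 : ∀ i ∈ Finset.univ, v i ^ 2 = 0 :=
    (Finset.sum_eq_zero_iff_of_nonneg (fun i _ => sq_nonneg _)).mp
      (le_antisymm hs (Finset.sum_nonneg fun i _ => sq_nonneg _))
  funext i
  exact pow_eq_zero_iff (n := 2) (by norm_num) |>.mp (h2 i (Finset.mem_univ i))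

lemma l2_smul (c : ℝ) (v : Fin d → ℝ) : l2 (c • v) = |c| * l2 v := by
  rw [l2, l2]
  have h : ∑ i, (c • v) i ^ 2 = c ^ 2 * ∑ i, v i ^ 2 := by
    rw [Finset.mul_sum]
    refine Finset.sum_congr rfl fun i _ => ?_
    simp [smul_eq_mul]
    ring
  rw [h, Real.sqrt_mul (sq_nonneg c), Real.sqrt_sq_eq_abs]

lemma l2_sub_sq (g w : Fin d → ℝ) (t : ℝ) :
    l2 (g - t • w) ^ 2 = l2 g ^ 2 - 2 * t * ip g w + t ^ 2 * l2 w ^ 2 := by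
  rw [l2_sq, l2_sq, l2_sq, ip]
  have h : ∀ i ∈ Finset.univ, (g - t • w) i ^ 2
      = g i ^ 2 - 2 * t * (g i * w i) + t ^ 2 * w i ^ 2 := by
    intro i _
    simp only [Pi.sub_apply, Pi.smul_apply, smul_eq_mul]
    ring
  rw [Finset.sum_congr rfl h, Finset.sum_add_distrib, Finset.sum_sub_distrib,
    ← Finset.mul_sum, ← Finset.mul_sum]

lemma l2_le_sum_abs (v : Fin d → ℝ) : l2 v ≤ ∑ i, |v i| := by
  rw [l2]
  have h : ∑ i, v i ^ 2 ≤ (∑ i, |v i|) ^ 2 := by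
    have h2 : ∑ i, |v i| ^ 2 ≤ (∑ i, |v i|) ^ 2 :=
      Finset.sum_sq_le_sq_sum_of_nonneg fun i _ => abs_nonneg _
    simpa [sq_abs] using h2
  calc Real.sqrt (∑ i, v i ^ 2) ≤ Real.sqrt ((∑ i, |v i|) ^ 2) := Real.sqrt_le_sqrt h
    _ = ∑ i, |v i| := by
        rw [Real.sqrt_sq (Finset.sum_nonneg fun i _ => abs_nonneg _)]

lemma l2_continuous : Continuous (l2 : (Fin d → ℝ) → ℝ) :=
  Real.continuous_sqrt.comp (continuous_finset_sum _ fun i _ => (continuous_apply i).pow 2)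

lemma ip_sub_left (u u' w : Fin d → ℝ) : ip u w = ip u' w + ip (u - u') w := by
  simp only [ip, Pi.sub_apply]
  rw [← Finset.sum_add_distrib]
  refine Finset.sum_congr rfl fun i _ => by ring

lemma stdGaussian_map_eval (i : Fin d) :
    (stdGaussian (Fin d)).map (fun g => g i) = gaussianReal 0 1 := by
  classical
  rw [_root_.stdGaussian]
  ext s hs
  rw [Measure.map_apply (measurable_pi_apply i) hs]
  have hpre : (fun g : Fin d → ℝ => g i) ⁻¹' s
      = Set.pi Set.univ (Function.update (fun _ => Set.univ) i s) :=
    Set.eval_preimage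
  rw [hpre, Measure.pi_pi]
  rw [Finset.prod_eq_single i (fun j _ hj => by simp [Function.update_of_ne hj])
    (fun h => absurd (Finset.mem_univ i) h)]
  simp


end vecAux

section opAux
variable {d : ℕ}
variable {d : ℕ}

lemma integral_comp_eval {i : Fin d} {φ : ℝ → ℝ}
    (hφ : AEStronglyMeasurable φ (gaussianReal 0 1)) :
    ∫ g, φ (g i) ∂stdGaussian (Fin d) = ∫ x, φ x ∂gaussianReal 0 1 := by
  rw [← stdGaussian_map_eval i] at hφ ⊢
  exact (integral_map (measurable_pi_apply i).aemeasurable hφ).symm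

lemma integrable_comp_eval {i : Fin d} {φ : ℝ → ℝ} (hφ : Integrable φ (gaussianReal 0 1)) :
    Integrable (fun g : Fin d → ℝ => φ (g i)) (stdGaussian (Fin d)) := by
  rw [← stdGaussian_map_eval i] at hφ
  exact (integrable_map_measure hφ.aestronglyMeasurable
    (measurable_pi_apply i).aemeasurable).mp hφ

variable {p : ℕ} (Ω : Fin p → Fin d → ℝ)

lemma f_nonneg (z : Fin d → ℝ) : 0 ≤ l1 (amul Ω z) :=
  Finset.sum_nonneg fun i _ => abs_nonneg _

lemma f_subadd (z x : Fin d → ℝ) : l1 (amul Ω (z + x)) ≤ l1 (amul Ω z) + l1 (amul Ω x) := by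
  simp only [l1, ← Finset.sum_add_distrib]
  refine Finset.sum_le_sum fun i _ => ?_
  have h : amul Ω (z + x) i = amul Ω z i + amul Ω x i := by
    simp only [amul, ip, Pi.add_apply, ← Finset.sum_add_distrib]
    refine Finset.sum_congr rfl fun j _ => by ring
  rw [h]
  exact abs_add_le _ _

lemma f_bound {z : Fin d → ℝ} (hz : l2 z ≤ 1) :
    l1 (amul Ω z) ≤ ∑ i, ∑ j, |Ω i j| := by
  refine Finset.sum_le_sum fun i _ => ?_
  have habs : ∀ j, |z j| ≤ 1 := fun j => le_trans (by
    have := Finset.single_le_sum (f := fun j => z j ^ 2) (fun j _ => sq_nonneg _)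
      (Finset.mem_univ j)
    calc |z j| = Real.sqrt (z j ^ 2) := (Real.sqrt_sq_eq_abs _).symm
      _ ≤ l2 z := Real.sqrt_le_sqrt this) hz
  calc |amul Ω z i| ≤ ∑ j, |Ω i j * z j| := by
        rw [amul, ip]
        exact Finset.abs_sum_le_sum_abs _ _
    _ ≤ ∑ j, |Ω i j| := by
        refine Finset.sum_le_sum fun j _ => ?_
        rw [abs_mul]
        exact mul_le_of_le_one_right (abs_nonneg _) (habs j)

lemma maxL1_bddAbove : BddAbove ((fun z => l1 (amul Ω z)) '' {z | l2 z ≤ 1}) := by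
  refine ⟨∑ i, ∑ j, |Ω i j|, ?_⟩
  rintro y ⟨z, hz, rfl⟩
  exact f_bound Ω hz

lemma f_le_maxL1 {z : Fin d → ℝ} (hz : l2 z ≤ 1) : l1 (amul Ω z) ≤ maxL1 Ω :=
  le_csSup (maxL1_bddAbove Ω) ⟨z, hz, rfl⟩

lemma maxL1_nonneg : 0 ≤ maxL1 Ω := by
  refine le_trans (f_nonneg Ω 0) (f_le_maxL1 Ω ?_)
  simp [l2]

lemma subdiff_l2_le {x w : Fin d → ℝ}
    (hw : w ∈ subdiffAt (fun z => l1 (amul Ω z)) x) : l2 w ≤ maxL1 Ω := by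
  rcases le_or_gt (l2 w) 0 with h | h
  · exact h.trans (maxL1_nonneg Ω)
  · set z : Fin d → ℝ := (l2 w)⁻¹ • w with hz
    have hz1 : l2 z ≤ 1 := by
      rw [hz, l2_smul, abs_of_nonneg (inv_nonneg.mpr (le_of_lt h)), inv_mul_cancel₀ (ne_of_gt h)]
    have h1 := hw (z + x)
    have h2 : ip (z + x - x) w = l2 w := by
      have he : z + x - x = z := add_sub_cancel_right z x
      rw [he, hz]
      have : ip ((l2 w)⁻¹ • w) w = (l2 w)⁻¹ * ∑ i, w i ^ 2 := by
        rw [ip, Finset.mul_sum]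
        refine Finset.sum_congr rfl fun i _ => ?_
        simp [smul_eq_mul]
        ring
      rw [this, ← l2_sq, pow_two, ← mul_assoc, inv_mul_cancel₀ (ne_of_gt h), one_mul]
    have h3 := f_subadd Ω z x
    have h4 := f_le_maxL1 Ω hz1
    simp only at h1
    rw [h2] at h1
    linarith


end opAux

theorem dist_to_scaled_subdiff_bound (p d : ℕ) (Ω : Fin p → Fin d → ℝ) (x : Fin d → ℝ) :
    sInf {r | ∃ t : ℝ, 0 ≤ t ∧
        r = ∫ g, (distTo g (t • subdiffAt (fun z => l1 (amul Ω z)) x)) ^ 2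
              ∂stdGaussian (Fin d)}
      ≤ d - gaussWidth (subdiffAt (fun z => l1 (amul Ω z)) x) ^ 2 / maxL1 Ω ^ 2 := by
  classical
  set S := subdiffAt (fun z => l1 (amul Ω z)) x with hSdef
  set L := maxL1 Ω with hLdef
  set μ := stdGaussian (Fin d) with hμdef
  have hProb : IsProbabilityMeasure μ := by
    rw [hμdef, _root_.stdGaussian]; infer_instance
  set A := {r | ∃ t : ℝ, 0 ≤ t ∧ r = ∫ g, (distTo g (t • S)) ^ 2 ∂μ} with hAdef
  have hdist_nonneg : ∀ (g : Fin d → ℝ) (T : Set (Fin d → ℝ)), 0 ≤ distTo g T := by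
    intro g T
    refine Real.sInf_nonneg ?_
    rintro y ⟨u, hu, rfl⟩
    exact l2_nonneg _
  have hA_bdd : BddBelow A := by
    refine ⟨0, ?_⟩
    rintro r ⟨t, ht, rfl⟩
    exact integral_nonneg fun g => sq_nonneg _
  by_cases hSne : S.Nonempty
  swap
  · -- S is empty
    have hSe : S = ∅ := Set.not_nonempty_iff_eq_empty.mp hSne
    have h0 : (0:ℝ) ∈ A := by
      refine ⟨0, le_refl 0, ?_⟩
      have hd : ∀ g : Fin d → ℝ, distTo g ((0:ℝ) • S) = 0 := by
        intro g
        rw [hSe]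
        simp [distTo, Real.sInf_empty]
      simp [hd]
    have hw0 : gaussWidth S = 0 := by
      rw [gaussWidth, hSe]
      simp [Real.sSup_empty]
    calc sInf A ≤ 0 := csInf_le hA_bdd h0
      _ ≤ (d : ℝ) - gaussWidth S ^ 2 / L ^ 2 := by
          rw [hw0]
          simp
  -- S nonempty
  have hL0 : 0 ≤ L := maxL1_nonneg Ω
  have hSL : ∀ w ∈ S, l2 w ≤ L := fun w hw => subdiff_l2_le Ω hw
  obtain ⟨w₀, hw₀⟩ := hSne
  set F : (Fin d → ℝ) → ℝ := fun g => sSup ((fun w => ip g w) '' S) with hFdef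
  have hW : gaussWidth S = ∫ g, F g ∂μ := rfl
  have hbdd : ∀ g : Fin d → ℝ, BddAbove ((fun w => ip g w) '' S) := by
    intro g
    refine ⟨l2 g * L, ?_⟩
    rintro y ⟨w, hw, rfl⟩
    exact le_trans (ip_le_l2 g w) (mul_le_mul_of_nonneg_left (hSL w hw) (l2_nonneg g))
  have hF_le : ∀ g, F g ≤ l2 g * L := by
    intro g
    refine csSup_le (Set.Nonempty.image _ ⟨w₀, hw₀⟩) ?_
    rintro y ⟨w, hw, rfl⟩
    exact le_trans (ip_le_l2 g w) (mul_le_mul_of_nonneg_left (hSL w hw) (l2_nonneg g))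
  have hF_ge : ∀ g, ip g w₀ ≤ F g := fun g => le_csSup (hbdd g) ⟨w₀, hw₀, rfl⟩
  have hF_abs : ∀ g, |F g| ≤ L * l2 g := by
    intro g
    rw [abs_le]
    constructor
    · have h1 : -(l2 g * l2 w₀) ≤ ip g w₀ := neg_l2_le_ip g w₀
      have h2 : l2 g * l2 w₀ ≤ l2 g * L := mul_le_mul_of_nonneg_left (hSL w₀ hw₀) (l2_nonneg g)
      have := hF_ge g
      rw [mul_comm]
      linarith
    · rw [mul_comm]
      exact hF_le g
  have hF_lip : ∀ g g', F g ≤ F g' + L * l2 (g - g') := by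
    intro g g'
    refine csSup_le (Set.Nonempty.image _ ⟨w₀, hw₀⟩) ?_
    rintro y ⟨w, hw, rfl⟩
    have h1 : ip g w = ip g' w + ip (g - g') w := ip_sub_left g g' w
    have h2 : ip (g - g') w ≤ l2 (g - g') * l2 w := ip_le_l2 _ _
    have h3 : l2 (g - g') * l2 w ≤ l2 (g - g') * L :=
      mul_le_mul_of_nonneg_left (hSL w hw) (l2_nonneg _)
    have h4 : ip g' w ≤ F g' := le_csSup (hbdd g') ⟨w, hw, rfl⟩
    have h5 : l2 (g - g') * L = L * l2 (g - g') := mul_comm _ _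
    linarith
  have hF_cont : Continuous F := by
    rw [continuous_iff_continuousAt]
    intro g₀
    have hcont : Continuous (fun g : Fin d → ℝ => l2 (g - g₀)) :=
      l2_continuous.comp (continuous_id.sub continuous_const)
    have h0 : Filter.Tendsto (fun g : Fin d → ℝ => l2 (g - g₀)) (nhds g₀) (nhds 0) := by
      have h := hcont.tendsto g₀
      have hval : l2 (g₀ - g₀) = 0 := by simp [l2]
      rwa [hval] at h
    have hlow : Filter.Tendsto (fun g : Fin d → ℝ => F g₀ - L * l2 (g - g₀)) (nhds g₀)
        (nhds (F g₀)) := by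
      have := Filter.Tendsto.sub (tendsto_const_nhds (x := F g₀)) (h0.const_mul L)
      simpa using this
    have hhigh : Filter.Tendsto (fun g : Fin d → ℝ => F g₀ + L * l2 (g - g₀)) (nhds g₀)
        (nhds (F g₀)) := by
      have := Filter.Tendsto.add (tendsto_const_nhds (x := F g₀)) (h0.const_mul L)
      simpa using this
    refine tendsto_of_tendsto_of_tendsto_of_le_of_le hlow hhigh ?_ ?_
    · intro g
      have h := hF_lip g₀ g
      have he : l2 (g₀ - g) = l2 (g - g₀) := by
        rw [l2, l2]
        congr 1
        refine Finset.sum_congr rfl fun i _ => ?_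
        simp only [Pi.sub_apply]
        ring
      rw [he] at h
      show F g₀ - L * l2 (g - g₀) ≤ F g
      linarith
    · intro g
      have h := hF_lip g g₀
      show F g ≤ F g₀ + L * l2 (g - g₀)
      linarith
  -- integrability facts
  have hInt_coord_sq : ∀ i : Fin d, Integrable (fun g : Fin d → ℝ => (g i) ^ 2) μ :=
    fun i => integrable_comp_eval integrable_sq_gauss
  have hInt_l2sq : Integrable (fun g : Fin d → ℝ => l2 g ^ 2) μ := by
    have he : (fun g : Fin d → ℝ => l2 g ^ 2) = fun g => ∑ i, (g i) ^ 2 := by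
      ext g; exact l2_sq g
    rw [he]
    exact integrable_finset_sum _ fun i _ => hInt_coord_sq i
  have hint_abs : ∀ i : Fin d, Integrable (fun g : Fin d → ℝ => |g i|) μ :=
    fun i => _root_.integrable_comp_eval integrable_id_gauss.abs
  have hInt_l2 : Integrable (fun g : Fin d → ℝ => l2 g) μ := by
    refine (integrable_finset_sum Finset.univ fun i (_ : i ∈ Finset.univ) =>
      hint_abs i).mono' l2_continuous.aestronglyMeasurable ?_
    refine ae_of_all _ fun g => ?_
    rw [Real.norm_eq_abs, abs_of_nonneg (l2_nonneg g)]
    exact l2_le_sum_abs g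
  have hIntF : Integrable F μ := by
    refine (hInt_l2.const_mul L).mono' hF_cont.aestronglyMeasurable ?_
    refine ae_of_all _ fun g => ?_
    rw [Real.norm_eq_abs]
    exact hF_abs g
  have hint_l2sq_val : ∫ g, l2 g ^ 2 ∂μ = d := by
    have he : (fun g : Fin d → ℝ => l2 g ^ 2) = fun g => ∑ i, (g i) ^ 2 := by
      ext g; exact l2_sq g
    rw [he, integral_finset_sum _ fun i _ => hInt_coord_sq i]
    have hone : ∀ i : Fin d, (∫ g, (g i) ^ 2 ∂μ) = 1 := by
      intro i
      have h := integral_comp_eval (d := d) (i := i) (φ := fun y : ℝ => y ^ 2)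
        ((continuous_pow 2).measurable.aestronglyMeasurable)
      rw [integral_sq_gauss] at h
      exact h
    rw [Finset.sum_congr rfl fun i _ => hone i]
    simp
  have hw0int : Integrable (fun g : Fin d → ℝ => ip g w₀) μ := by
    have he : (fun g : Fin d → ℝ => ip g w₀) = fun g => ∑ i, g i * w₀ i := rfl
    rw [he]
    exact integrable_finset_sum _ fun i _ =>
      (integrable_comp_eval integrable_id_gauss).mul_const (w₀ i)
  have hw0val : ∫ g, ip g w₀ ∂μ = 0 := by
    have he : (fun g : Fin d → ℝ => ip g w₀) = fun g => ∑ i, g i * w₀ i := rfl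
    rw [he, integral_finset_sum _ fun i _ =>
      (integrable_comp_eval integrable_id_gauss).mul_const (w₀ i)]
    refine Finset.sum_eq_zero fun i _ => ?_
    rw [integral_mul_const]
    have h := integral_comp_eval (d := d) (i := i) (φ := fun y : ℝ => y)
      measurable_id.aestronglyMeasurable
    rw [integral_id_gauss] at h
    have h2 : (∫ g : Fin d → ℝ, g i ∂stdGaussian (Fin d)) = 0 := h
    rw [h2, zero_mul]
  have hW0 : 0 ≤ ∫ g, F g ∂μ := by
    have h := integral_mono hw0int hIntF hF_ge
    rwa [hw0val] at h
  set W := ∫ g, F g ∂μ with hWdef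
  by_cases hLpos : 0 < L
  swap
  · -- L = 0, so S = {0}
    have hLeq : L = 0 := le_antisymm (not_lt.mp hLpos) hL0
    have hw00 : w₀ = 0 := l2_eq_zero (by rw [← hLeq]; exact hSL w₀ hw₀)
    have hSeq : S = {0} := by
      refine subset_antisymm (fun w hw => ?_) (fun w hw => ?_)
      · have := hSL w hw
        rw [hLeq] at this
        simpa using l2_eq_zero this
      · rw [Set.mem_singleton_iff] at hw
        rw [hw, ← hw00]
        exact hw₀
    have hdist : ∀ g : Fin d → ℝ, distTo g ((0:ℝ) • S) = l2 g := by
      intro g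
      have h0S : (0:ℝ) • S = {(0 : Fin d → ℝ)} := by
        rw [Set.zero_smul_set ⟨w₀, hw₀⟩]
        rfl
      rw [distTo, h0S, Set.image_singleton, csInf_singleton, sub_zero]
    have hmem : (d : ℝ) ∈ A := by
      refine ⟨0, le_refl 0, ?_⟩
      rw [← hint_l2sq_val]
      congr 1
      ext g
      rw [hdist g]
    have hWzero : W = 0 := by
      rw [hWdef]
      have : ∀ g : Fin d → ℝ, F g = 0 := by
        intro g
        rw [hFdef]
        simp only [hSeq, Set.image_singleton, csSup_singleton]
        simp [ip]
      rw [show F = fun _ => (0:ℝ) from funext this]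
      simp
    calc sInf A ≤ (d : ℝ) := csInf_le hA_bdd hmem
      _ = (d : ℝ) - gaussWidth S ^ 2 / L ^ 2 := by
          rw [hW, hWzero]
          simp
  -- main case
  set t₀ := W / L ^ 2 with ht₀def
  have ht₀ : 0 ≤ t₀ := div_nonneg hW0 (sq_nonneg L)
  have hpt : ∀ g : Fin d → ℝ,
      distTo g (t₀ • S) ^ 2 ≤ l2 g ^ 2 - 2 * t₀ * F g + t₀ ^ 2 * L ^ 2 := by
    intro g
    have hdist_le : ∀ w ∈ S, distTo g (t₀ • S) ≤ l2 (g - t₀ • w) := by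
      intro w hw
      refine csInf_le ⟨0, ?_⟩ ⟨t₀ • w, Set.smul_mem_smul_set hw, rfl⟩
      rintro y ⟨u, hu, rfl⟩
      exact l2_nonneg _
    have hd0 : 0 ≤ distTo g (t₀ • S) := hdist_nonneg g _
    have hkey : ∀ w ∈ S,
        distTo g (t₀ • S) ^ 2 ≤ l2 g ^ 2 - 2 * t₀ * ip g w + t₀ ^ 2 * L ^ 2 := by
      intro w hw
      have h1 : distTo g (t₀ • S) ^ 2 ≤ l2 (g - t₀ • w) ^ 2 :=
        pow_le_pow_left₀ hd0 (hdist_le w hw) 2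
      rw [l2_sub_sq] at h1
      have h2 : l2 w ^ 2 ≤ L ^ 2 := pow_le_pow_left₀ (l2_nonneg w) (hSL w hw) 2
      have h3 : t₀ ^ 2 * l2 w ^ 2 ≤ t₀ ^ 2 * L ^ 2 :=
        mul_le_mul_of_nonneg_left h2 (sq_nonneg t₀)
      linarith
    rcases eq_or_lt_of_le ht₀ with h0 | hpos
    · have h := hkey w₀ hw₀
      rw [← h0] at h ⊢
      simpa using h
    · have hFle : F g ≤ (l2 g ^ 2 + t₀ ^ 2 * L ^ 2 - distTo g (t₀ • S) ^ 2) / (2 * t₀) := by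
        refine csSup_le (Set.Nonempty.image _ ⟨w₀, hw₀⟩) ?_
        rintro y ⟨w, hw, rfl⟩
        rw [le_div_iff₀ (by positivity)]
        have h := hkey w hw
        nlinarith
      have h2 := (le_div_iff₀ (by positivity : (0:ℝ) < 2 * t₀)).mp hFle
      nlinarith
  have hIntRHS : Integrable (fun g : Fin d → ℝ =>
      l2 g ^ 2 - 2 * t₀ * F g + t₀ ^ 2 * L ^ 2) μ :=
    (hInt_l2sq.sub (hIntF.const_mul (2 * t₀))).add (integrable_const _)
  have hIneq : (∫ g, distTo g (t₀ • S) ^ 2 ∂μ) ≤ d - 2 * t₀ * W + t₀ ^ 2 * L ^ 2 := by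
    have h := integral_mono_of_nonneg (ae_of_all _ fun g => sq_nonneg _) hIntRHS
      (ae_of_all _ hpt)
    have hsum : ∫ g, (l2 g ^ 2 - 2 * t₀ * F g + t₀ ^ 2 * L ^ 2) ∂μ
        = (d : ℝ) - 2 * t₀ * W + t₀ ^ 2 * L ^ 2 := by
      rw [integral_add (f := fun g : Fin d → ℝ => l2 g ^ 2 - 2 * t₀ * F g)
          (g := fun _ => t₀ ^ 2 * L ^ 2)
          (hInt_l2sq.sub (hIntF.const_mul (2 * t₀))) (integrable_const _),
        integral_sub (f := fun g : Fin d → ℝ => l2 g ^ 2)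
          (g := fun g : Fin d → ℝ => 2 * t₀ * F g) hInt_l2sq (hIntF.const_mul (2 * t₀)),
        hint_l2sq_val, integral_const]
      have hmul : ∫ g, 2 * t₀ * F g ∂μ = 2 * t₀ * W := integral_const_mul _ _
      rw [hmul]
      simp [measure_univ]
    rw [hsum] at h
    exact h
  have hmem₀ : (∫ g, distTo g (t₀ • S) ^ 2 ∂μ) ∈ A := ⟨t₀, ht₀, rfl⟩
  refine le_trans (csInf_le hA_bdd hmem₀) (le_trans hIneq (le_of_eq ?_))
  have hLne : L ≠ 0 := ne_of_gt hLpos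
  rw [hW, ht₀def]
  field_simp
  ring


end
end

section
/- Let Ω ∈ R^{p×d} with rows ω_j, let x ∈ R^d be cosparse with cosupport Λ ⊆ {1,…,p} (i.e., (Ωx)_i = 0 exactly for i ∈ Λ), and let g ∈ R^d be a standard Gaussian vector. Then the Gaussian width of the subdifferential satisfies ℓ(∂‖Ω·‖₁(x)) = E‖Ω_Λ g‖₁ = √(2/π) · Σ_{i∈Λ} ‖ω_i‖₂, where Ω_Λ is the submatrix of Ω with rows indexed by Λ. -/
open MeasureTheory ProbabilityTheory Real Finset Pointwise
open scoped NNReal ENNReal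
noncomputable section
lemma pdf_rw (v₁ v₂ : ℝ≥0) (h₁ : v₁ ≠ 0) (h₂ : v₂ ≠ 0) (y x : ℝ) :
    gaussianPDFReal 0 v₁ x * gaussianPDFReal x v₂ y =
      ((√(2 * π * v₁))⁻¹ * (√(2 * π * v₂))⁻¹ * rexp (- y^2 / (2 * ((v₁:ℝ) + v₂)))) *
        rexp (-(((v₁:ℝ) + v₂) / (2 * v₁ * v₂)) * (x - ((v₁:ℝ) / ((v₁:ℝ) + v₂)) * y)^2) := by
  have hV₁ : (0:ℝ) < v₁ := NNReal.coe_pos.mpr (pos_iff_ne_zero.mpr h₁)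
  have hV₂ : (0:ℝ) < v₂ := NNReal.coe_pos.mpr (pos_iff_ne_zero.mpr h₂)
  have hS : (0:ℝ) < (v₁:ℝ) + v₂ := by linarith
  have key : (-x ^ 2 / (2 * (v₁:ℝ)) + -(y - x) ^ 2 / (2 * (v₂:ℝ))) =
      (-y ^ 2 / (2 * ((v₁:ℝ) + v₂)) +
        -(((v₁:ℝ) + v₂) / (2 * v₁ * v₂)) * (x - (v₁:ℝ) / ((v₁:ℝ) + v₂) * y) ^ 2) := by
    field_simp
    ring
  simp only [gaussianPDFReal, sub_zero]
  rw [mul_mul_mul_comm, ← Real.exp_add, key, Real.exp_add]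
  ring

lemma pdf_conv_integrable (v₁ v₂ : ℝ≥0) (h₁ : v₁ ≠ 0) (h₂ : v₂ ≠ 0) (y : ℝ) :
    Integrable (fun x => gaussianPDFReal 0 v₁ x * gaussianPDFReal x v₂ y) := by
  have hV₁ : (0:ℝ) < v₁ := NNReal.coe_pos.mpr (pos_iff_ne_zero.mpr h₁)
  have hV₂ : (0:ℝ) < v₂ := NNReal.coe_pos.mpr (pos_iff_ne_zero.mpr h₂)
  have hb : (0:ℝ) < ((v₁:ℝ) + v₂) / (2 * v₁ * v₂) := by positivity
  simp only [funext fun x => pdf_rw v₁ v₂ h₁ h₂ y x]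
  exact ((integrable_exp_neg_mul_sq hb).comp_sub_right _).const_mul _

lemma pdf_conv (v₁ v₂ : ℝ≥0) (h₁ : v₁ ≠ 0) (h₂ : v₂ ≠ 0) (y : ℝ) :
    ∫ x, gaussianPDFReal 0 v₁ x * gaussianPDFReal x v₂ y = gaussianPDFReal 0 (v₁ + v₂) y := by
  have hV₁ : (0:ℝ) < v₁ := NNReal.coe_pos.mpr (pos_iff_ne_zero.mpr h₁)
  have hV₂ : (0:ℝ) < v₂ := NNReal.coe_pos.mpr (pos_iff_ne_zero.mpr h₂)
  have hS : (0:ℝ) < (v₁:ℝ) + v₂ := by linarith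
  have hb : (0:ℝ) < ((v₁:ℝ) + v₂) / (2 * v₁ * v₂) := by positivity
  simp only [funext fun x => pdf_rw v₁ v₂ h₁ h₂ y x]
  rw [integral_const_mul]
  rw [integral_sub_right_eq_self (fun x => rexp (-(((v₁:ℝ) + v₂) / (2 * v₁ * v₂)) * x ^ 2)) _]
  rw [integral_gaussian]
  have hcoe : ((v₁ + v₂ : ℝ≥0) : ℝ) = (v₁:ℝ) + v₂ := by push_cast; ring
  rw [gaussianPDFReal, sub_zero, hcoe]
  have h1 : π / (((v₁:ℝ) + v₂) / (2 * v₁ * v₂)) =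
      (2 * π * v₁) * (2 * π * v₂) / (2 * π * ((v₁:ℝ) + v₂)) := by
    field_simp
  rw [h1, Real.sqrt_div (by positivity), Real.sqrt_mul (by positivity)]
  have e1 : √(2 * π * (v₁:ℝ)) ≠ 0 := by positivity
  have e2 : √(2 * π * (v₂:ℝ)) ≠ 0 := by positivity
  have e3 : √(2 * π * ((v₁:ℝ) + v₂)) ≠ 0 := by positivity
  field_simp
  rw [← Real.sqrt_mul (by positivity : (0:ℝ) ≤ 2 * π), ← Real.sqrt_mul (by positivity : (0:ℝ) ≤ 2 * π * v₁)]
  congr 1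
  ring

lemma conv_gauss (v₁ v₂ : ℝ≥0) :
    Measure.map (fun p : ℝ × ℝ => p.1 + p.2) ((gaussianReal 0 v₁).prod (gaussianReal 0 v₂))
      = gaussianReal 0 (v₁ + v₂) := by
  by_cases h₁ : v₁ = 0
  · rw [h₁, gaussianReal_zero_var, Measure.dirac_prod, Measure.map_map (by fun_prop) (by fun_prop)]
    have : ((fun p : ℝ × ℝ => p.1 + p.2) ∘ Prod.mk (0:ℝ)) = (fun x : ℝ => (0:ℝ) + x) := rfl
    rw [this, gaussianReal_map_const_add, zero_add, zero_add]
  by_cases h₂ : v₂ = 0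
  · rw [h₂, gaussianReal_zero_var, Measure.prod_dirac, Measure.map_map (by fun_prop) (by fun_prop)]
    have : ((fun p : ℝ × ℝ => p.1 + p.2) ∘ (fun x : ℝ => (x, (0:ℝ)))) = (fun x : ℝ => x + (0:ℝ)) := rfl
    rw [this, gaussianReal_map_add_const, zero_add, add_zero]
  have hmpdf2 : Measurable (Function.uncurry fun x y => gaussianPDF x v₂ y) := by
    apply Measurable.ennreal_ofReal
    simp only [gaussianPDFReal]
    fun_prop
  have hS : v₁ + v₂ ≠ 0 := by
    simp only [ne_eq, add_eq_zero, not_and_or]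
    exact Or.inl h₁
  ext s hs
  rw [Measure.map_apply (by fun_prop) hs, Measure.prod_apply (measurableSet_preimage (by fun_prop) hs)]
  have step1 : ∀ x : ℝ, gaussianReal 0 v₂ (Prod.mk x ⁻¹' ((fun p : ℝ × ℝ => p.1 + p.2) ⁻¹' s))
      = ∫⁻ y in s, gaussianPDF x v₂ y := by
    intro x
    have : Prod.mk x ⁻¹' ((fun p : ℝ × ℝ => p.1 + p.2) ⁻¹' s) = (fun y => x + y) ⁻¹' s := rfl
    rw [this, ← Measure.map_apply (by fun_prop) hs, gaussianReal_map_const_add, zero_add,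
      gaussianReal_apply x h₂ s]
  simp_rw [step1]
  rw [gaussianReal_of_var_ne_zero 0 h₁,
    lintegral_withDensity_eq_lintegral_mul _ (measurable_gaussianPDF 0 v₁)
      (Measurable.lintegral_prod_right hmpdf2)]
  simp only [Pi.mul_apply]
  have step2 : ∀ x : ℝ, gaussianPDF 0 v₁ x * ∫⁻ y in s, gaussianPDF x v₂ y
      = ∫⁻ y in s, gaussianPDF 0 v₁ x * gaussianPDF x v₂ y := by
    intro x
    rw [lintegral_const_mul _ (measurable_gaussianPDF x v₂)]
  simp_rw [step2]
  rw [lintegral_lintegral_swap]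
  swap
  · exact (((measurable_gaussianPDF 0 v₁).comp measurable_fst).mul hmpdf2).aemeasurable
  have step3 : ∀ y : ℝ, ∫⁻ x, gaussianPDF 0 v₁ x * gaussianPDF x v₂ y = gaussianPDF 0 (v₁ + v₂) y := by
    intro y
    have hnn : ∀ x : ℝ, 0 ≤ gaussianPDFReal 0 v₁ x * gaussianPDFReal x v₂ y := fun x =>
      mul_nonneg (gaussianPDFReal_nonneg _ _ _) (gaussianPDFReal_nonneg _ _ _)
    simp_rw [gaussianPDF, ← ENNReal.ofReal_mul (gaussianPDFReal_nonneg 0 v₁ _)]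
    rw [← ofReal_integral_eq_lintegral_ofReal (pdf_conv_integrable v₁ v₂ h₁ h₂ y)
      (Filter.Eventually.of_forall hnn), pdf_conv v₁ v₂ h₁ h₂ y]
  simp_rw [step3]
  rw [← gaussianReal_apply 0 hS s]

lemma map_linear : ∀ (n : ℕ) (c : Fin n → ℝ),
    Measure.map (fun g : Fin n → ℝ => ∑ j, c j * g j) (Measure.pi fun _ => gaussianReal 0 1)
      = gaussianReal 0 ((∑ j, c j ^ 2).toNNReal) := by
  intro n
  induction n with
  | zero =>
    intro c
    simp only [Finset.univ_eq_empty, Finset.sum_empty, Real.toNNReal_zero, gaussianReal_zero_var]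
    rw [Measure.map_const, measure_univ, one_smul]
  | succ n ih =>
    intro c
    have hmp := measurePreserving_piFinSuccAbove (fun _ : Fin (n+1) => gaussianReal 0 1) 0
    have hpi : (Measure.pi fun _ : Fin (n+1) => gaussianReal 0 1)
        = Measure.map (MeasurableEquiv.piFinSuccAbove (fun _ : Fin (n+1) => ℝ) 0).symm
            ((gaussianReal 0 1).prod (Measure.pi fun _ : Fin n => gaussianReal 0 1)) :=
      (hmp.symm _).map_eq.symm
    rw [hpi, Measure.map_map (by fun_prop) (MeasurableEquiv.measurable _)]
    have hcomp : ((fun g : Fin (n+1) → ℝ => ∑ j, c j * g j)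
          ∘ (MeasurableEquiv.piFinSuccAbove (fun _ : Fin (n+1) => ℝ) 0).symm)
        = (fun q : ℝ × ℝ => q.1 + q.2)
          ∘ (Prod.map (fun a : ℝ => c 0 * a)
              (fun y : Fin n → ℝ => ∑ j, c ((0 : Fin (n+1)).succAbove j) * y j)) := by
      ext p
      simp only [Function.comp_apply, MeasurableEquiv.piFinSuccAbove_symm_apply, Prod.map]
      rw [Fin.sum_univ_succAbove _ 0]
      simp [Fin.insertNth_apply_same, Fin.insertNth_apply_succAbove]
    rw [hcomp, ← Measure.map_map (by fun_prop) (by fun_prop),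
      ← Measure.map_prod_map _ _ (by fun_prop) (by fun_prop)]
    have h1 : Measure.map (fun a : ℝ => c 0 * a) (gaussianReal 0 1)
        = gaussianReal 0 (NNReal.mk ((c 0)^2) (sq_nonneg _)) := by
      rw [show (fun a : ℝ => c 0 * a) = (c 0 * ·) from rfl, gaussianReal_map_const_mul,
        mul_zero, mul_one]
    rw [h1, ih _, conv_gauss]
    congr 1
    ext
    rw [NNReal.coe_add, Real.coe_toNNReal _ (by positivity), NNReal.coe_mk,
      Real.coe_toNNReal _ (by positivity), Fin.sum_univ_succAbove (fun j => c j ^ 2) 0]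

lemma integral_Ioi_mul_exp {b : ℝ} (hb : 0 < b) :
    ∫ x in Set.Ioi (0:ℝ), x * rexp (-b * x ^ 2) = (2*b)⁻¹ := by
  have hderiv : ∀ x ∈ Set.Ioi (0:ℝ),
      HasDerivAt (fun x : ℝ => -(2*b)⁻¹ * rexp (-b * x ^ 2)) (x * rexp (-b * x ^ 2)) x := by
    intro x _
    have h1 : HasDerivAt (fun x : ℝ => -b * x ^ 2) (-b * (2 * x)) x := by
      simpa using ((hasDerivAt_pow 2 x).const_mul (-b))
    have := (h1.exp).const_mul (-(2*b)⁻¹)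
    refine this.congr_deriv ?_
    have h2b : (2*b)⁻¹ * (2*b) = 1 := inv_mul_cancel₀ (by positivity)
    linear_combination (x * rexp (-b * x ^ 2)) * h2b
  have htend : Filter.Tendsto (fun x : ℝ => -(2*b)⁻¹ * rexp (-b * x ^ 2)) Filter.atTop (nhds 0) := by
    rw [show (0:ℝ) = -(2*b)⁻¹ * 0 by ring]
    apply Filter.Tendsto.const_mul
    apply Real.tendsto_exp_atBot.comp
    apply Filter.Tendsto.const_mul_atTop_of_neg (by linarith : (-b) < 0)
    exact Filter.tendsto_pow_atTop (two_ne_zero)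
  have hint : IntegrableOn (fun x : ℝ => x * rexp (-b * x ^ 2)) (Set.Ioi 0) := by
    have := integrable_rpow_mul_exp_neg_mul_sq hb (by norm_num : (-1:ℝ) < 1)
    simp_rw [Real.rpow_one] at this
    exact this.integrableOn
  have := integral_Ioi_of_hasDerivAt_of_tendsto (a := 0)
    (Continuous.continuousWithinAt (by continuity)) hderiv hint htend
  rw [this]
  simp

lemma integral_abs_mul_gauss {b : ℝ} (hb : 0 < b) :
    ∫ x : ℝ, |x| * rexp (-b * x ^ 2) = b⁻¹ := by
  have h : ∀ x : ℝ, |x| * rexp (-b * x ^ 2) = |x| * rexp (-b * |x| ^ 2) := by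
    intro x; rw [sq_abs]
  simp_rw [h]
  rw [integral_comp_abs (f := fun x => x * rexp (-b * x ^ 2)), integral_Ioi_mul_exp hb]
  field_simp

lemma integrable_abs_mul_gauss {b : ℝ} (hb : 0 < b) :
    Integrable (fun x : ℝ => |x| * rexp (-b * x ^ 2)) := by
  have := integrable_rpow_mul_exp_neg_mul_sq hb (by norm_num : (-1:ℝ) < 1)
  simp_rw [Real.rpow_one] at this
  have h2 := this.abs
  have h : ∀ x : ℝ, |x * rexp (-b * x ^ 2)| = |x| * rexp (-b * x ^ 2) := by
    intro x; rw [abs_mul, abs_of_pos (Real.exp_pos _)]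
  simpa only [h] using h2

lemma gauss_b_pos (v : ℝ≥0) (hv : v ≠ 0) : (0:ℝ) < (2 * (v:ℝ))⁻¹ := by
  have : (0:ℝ) < v := NNReal.coe_pos.mpr (pos_iff_ne_zero.mpr hv)
  positivity

lemma pdfReal_eq (v : ℝ≥0) (x : ℝ) :
    gaussianPDFReal 0 v x = (√(2 * π * v))⁻¹ * rexp (-(2 * (v:ℝ))⁻¹ * x ^ 2) := by
  rw [gaussianPDFReal, sub_zero]
  congr 1
  rw [neg_div, neg_mul]
  congr 1
  ring

lemma integrable_abs_gaussianReal (v : ℝ≥0) : Integrable (fun x => |x|) (gaussianReal 0 v) := by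
  by_cases hv : v = 0
  · rw [hv, gaussianReal_zero_var]
    refine (integrable_zero _ _ _).congr ?_
    rw [MeasureTheory.ae_dirac_eq]
    exact Filter.eventually_pure.mpr (by simp)
  have hb := gauss_b_pos v hv
  rw [gaussianReal_of_var_ne_zero 0 hv]
  rw [integrable_withDensity_iff (measurable_gaussianPDF 0 v)
    (Filter.Eventually.of_forall fun x => ENNReal.ofReal_lt_top)]
  have heq : ∀ x : ℝ, |x| * (gaussianPDF 0 v x).toReal
      = (√(2 * π * v))⁻¹ * (|x| * rexp (-(2 * (v:ℝ))⁻¹ * x ^ 2)) := by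
    intro x
    rw [gaussianPDF, ENNReal.toReal_ofReal (gaussianPDFReal_nonneg _ _ _), pdfReal_eq]
    ring
  simp_rw [heq]
  exact (integrable_abs_mul_gauss hb).const_mul _

lemma integrable_id_gaussianReal (v : ℝ≥0) : Integrable (fun x => x) (gaussianReal 0 v) := by
  have := (integrable_abs_gaussianReal v)
  refine this.mono' aestronglyMeasurable_id ?_
  exact Filter.Eventually.of_forall fun x => by simp

lemma integral_abs_gaussianReal (v : ℝ≥0) :
    ∫ x, |x| ∂(gaussianReal 0 v) = √(2 / π) * √v := by
  by_cases hv : v = 0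
  · simp [hv, gaussianReal_zero_var, integral_dirac]
  have hb := gauss_b_pos v hv
  have hV : (0:ℝ) < v := NNReal.coe_pos.mpr (pos_iff_ne_zero.mpr hv)
  rw [gaussianReal_of_var_ne_zero 0 hv]
  have hd : (gaussianPDF 0 v) = fun x => ((fun y => (gaussianPDFReal 0 v y).toNNReal) x : ℝ≥0∞) := by
    ext x
    rw [gaussianPDF, ENNReal.ofReal]
  rw [hd, integral_withDensity_eq_integral_smul (by
    exact (measurable_gaussianPDFReal 0 v).real_toNNReal)]
  have heq : ∀ x : ℝ, (gaussianPDFReal 0 v x).toNNReal • |x|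
      = (√(2 * π * v))⁻¹ * (|x| * rexp (-(2 * (v:ℝ))⁻¹ * x ^ 2)) := by
    intro x
    rw [NNReal.smul_def, smul_eq_mul, Real.coe_toNNReal _ (gaussianPDFReal_nonneg _ _ _),
      pdfReal_eq]
    ring
  simp_rw [heq]
  rw [MeasureTheory.integral_const_mul, integral_abs_mul_gauss hb]
  rw [show ((2 * (v:ℝ))⁻¹)⁻¹ = 2 * v by simp]
  have h3 : √(2 * π * (v:ℝ)) * (√(2 / π) * √(v:ℝ)) = 2 * v := by
    rw [← Real.sqrt_mul (by positivity), ← Real.sqrt_mul (by positivity),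
      show (2 * π * (v:ℝ)) * (2 / π * (v:ℝ)) = (2 * (v:ℝ))^2 by field_simp]
    exact Real.sqrt_sq (by positivity)
  rw [inv_mul_eq_div, div_eq_iff (by positivity : √(2 * π * (v:ℝ)) ≠ 0)]
  linarith [h3]

lemma integral_id_gaussianReal (v : ℝ≥0) : ∫ x, x ∂(gaussianReal 0 v) = 0 := by
  have hmap : Measure.map (fun x : ℝ => (-1 : ℝ) * x) (gaussianReal 0 v) = gaussianReal 0 v := by
    rw [show (fun x : ℝ => (-1:ℝ) * x) = ((-1:ℝ) * ·) from rfl, gaussianReal_map_const_mul]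
    norm_num
  have h2 : ∫ x, x ∂(gaussianReal 0 v) = ∫ x, -x ∂(gaussianReal 0 v) := by
    conv_lhs => rw [← hmap]
    rw [integral_map (by fun_prop) measurable_id'.aestronglyMeasurable]
    simp_rw [neg_one_mul]
  rw [integral_neg] at h2
  linarith

section IPlemmas
variable {p d : ℕ}

lemma measurable_ip (c : Fin d → ℝ) : Measurable (fun g : Fin d → ℝ => ip c g) := by
  unfold ip
  exact Finset.measurable_sum _ fun j _ => (measurable_pi_apply j).const_mul _

lemma map_ip (c : Fin d → ℝ) :
    Measure.map (fun g : Fin d → ℝ => ip c g) (stdGaussian (Fin d))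
      = gaussianReal 0 ((∑ j, c j ^ 2).toNNReal) := map_linear d c

lemma integrable_abs_ip (c : Fin d → ℝ) :
    Integrable (fun g : Fin d → ℝ => |ip c g|) (stdGaussian (Fin d)) := by
  have hm : AEStronglyMeasurable (fun x : ℝ => |x|)
      (Measure.map (fun g : Fin d → ℝ => ip c g) (stdGaussian (Fin d))) :=
    continuous_abs.measurable.aestronglyMeasurable
  have h := (integrable_map_measure hm (measurable_ip c).aemeasurable).mp
  rw [map_ip c] at h
  exact h (integrable_abs_gaussianReal _)

lemma integrable_ip (c : Fin d → ℝ) :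
    Integrable (fun g : Fin d → ℝ => ip c g) (stdGaussian (Fin d)) := by
  have hm : AEStronglyMeasurable (fun x : ℝ => x)
      (Measure.map (fun g : Fin d → ℝ => ip c g) (stdGaussian (Fin d))) :=
    measurable_id'.aestronglyMeasurable
  have h := (integrable_map_measure hm (measurable_ip c).aemeasurable).mp
  rw [map_ip c] at h
  exact h (integrable_id_gaussianReal _)

lemma integral_abs_ip (c : Fin d → ℝ) :
    ∫ g, |ip c g| ∂stdGaussian (Fin d) = √(2 / π) * l2 c := by
  have h := integral_map (μ := stdGaussian (Fin d)) (φ := fun g : Fin d → ℝ => ip c g)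
    (measurable_ip c).aemeasurable (f := fun x : ℝ => |x|)
    continuous_abs.measurable.aestronglyMeasurable
  rw [map_ip c] at h
  rw [← h, integral_abs_gaussianReal, l2]
  congr 1
  rw [Real.coe_toNNReal _ (by positivity)]

lemma integral_ip_zero (c : Fin d → ℝ) :
    ∫ g, ip c g ∂stdGaussian (Fin d) = 0 := by
  have h := integral_map (μ := stdGaussian (Fin d)) (φ := fun g : Fin d → ℝ => ip c g)
    (measurable_ip c).aemeasurable (f := fun x : ℝ => x)
    measurable_id'.aestronglyMeasurable
  rw [map_ip c] at h
  rw [← h, _root_.integral_id_gaussianReal]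

lemma ip_atmul (Ω : Fin p → Fin d → ℝ) (β : Fin p → ℝ) (u : Fin d → ℝ) :
    ip u (atmul Ω β) = ∑ i, β i * ip (Ω i) u := by
  simp only [ip, atmul, Finset.mul_sum]
  rw [Finset.sum_comm]
  exact Finset.sum_congr rfl fun i _ => Finset.sum_congr rfl fun j _ => by ring

lemma ip_smul_left (t : ℝ) (g v : Fin d → ℝ) : ip (t • g) v = t * ip g v := by
  simp only [ip, Pi.smul_apply, smul_eq_mul, Finset.mul_sum]
  exact Finset.sum_congr rfl fun j _ => by ring

lemma amul_add_smul (Ω : Fin p → Fin d → ℝ) (x g : Fin d → ℝ) (t : ℝ) (i : Fin p) :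
    amul Ω (x + t • g) i = amul Ω x i + t * ip (Ω i) g := by
  simp only [amul, ip, Pi.add_apply, Pi.smul_apply, smul_eq_mul, mul_add,
    Finset.sum_add_distrib, Finset.mul_sum]
  congr 1
  exact Finset.sum_congr rfl fun j _ => by ring

lemma ip_sub_right (u : Fin d → ℝ) (a b : Fin d → ℝ) :
    ip u (a - b) = ip u a - ip u b := by
  simp only [ip, Pi.sub_apply, mul_sub, Finset.sum_sub_distrib]

lemma ip_sub_left_s5 (a b v : Fin d → ℝ) : ip (a - b) v = ip a v - ip b v := by
  simp only [ip, Pi.sub_apply, sub_mul, Finset.sum_sub_distrib]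

end IPlemmas

theorem gauss_width_subdiff (p d : ℕ) (Ω : Fin p → Fin d → ℝ) (x : Fin d → ℝ)
    (Λ : Finset (Fin p)) (hΛ : ∀ i, amul Ω x i = 0 ↔ i ∈ Λ) :
    gaussWidth (subdiffAt (fun z => l1 (amul Ω z)) x)
        = (∫ g, ∑ i ∈ Λ, |ip (Ω i) g| ∂stdGaussian (Fin d)) ∧
      (∫ g, ∑ i ∈ Λ, |ip (Ω i) g| ∂stdGaussian (Fin d))
        = Real.sqrt (2 / π) * ∑ i ∈ Λ, l2 (Ω i) := by
  classical
  set sg : ℝ → ℝ := fun t => if 0 ≤ t then (1:ℝ) else -1 with hsg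
  have hsg_mul : ∀ t : ℝ, sg t * t = |t| := by
    intro t
    by_cases h : 0 ≤ t
    · simp [hsg, h, abs_of_nonneg h]
    · simp [hsg, h, abs_of_neg (lt_of_not_ge h)]
  have hsg_abs : ∀ t : ℝ, |sg t| = 1 := by
    intro t; by_cases h : 0 ≤ t <;> simp [hsg, h]
  have hsg_le : ∀ (t c : ℝ), sg t * c ≤ |c| :=
    fun t c => (le_abs_self _).trans (le_of_eq (by rw [abs_mul, hsg_abs, one_mul]))
  set F : (Fin d → ℝ) → ℝ := fun g =>
    (∑ i ∈ Λᶜ, sg (amul Ω x i) * ip (Ω i) g) + ∑ i ∈ Λ, |ip (Ω i) g| with hF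
  set β : (Fin d → ℝ) → Fin p → ℝ :=
    fun g i => if i ∈ Λ then sg (ip (Ω i) g) else sg (amul Ω x i) with hβ
  have hβ_mem : ∀ g, atmul Ω (β g) ∈ subdiffAt (fun z => l1 (amul Ω z)) x := by
    intro g z
    have h2 : ∑ i, β g i * amul Ω x i = l1 (amul Ω x) := by
      rw [l1]
      refine Finset.sum_congr rfl fun i _ => ?_
      by_cases h : i ∈ Λ
      · simp [hβ, h, (hΛ i).mp ∘ id, (hΛ i).mpr h]
      · simp only [hβ, if_neg h]
        exact hsg_mul _
    have h1 : ip (z - x) (atmul Ω (β g))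
        = (∑ i, β g i * ip (Ω i) z) - ∑ i, β g i * amul Ω x i := by
      rw [ip_atmul]
      simp only [ip_sub_right, mul_sub, Finset.sum_sub_distrib]
      rfl
    have h3 : l1 (amul Ω x) + ip (z - x) (atmul Ω (β g)) = ∑ i, β g i * ip (Ω i) z := by
      rw [h1, h2]; ring
    rw [h3]
    refine (Finset.sum_le_sum fun i _ => ?_).trans (le_of_eq rfl)
    show β g i * ip (Ω i) z ≤ |amul Ω z i|
    by_cases h : i ∈ Λ
    · simp only [hβ, if_pos h]; exact hsg_le _ _
    · simp only [hβ, if_neg h]; exact hsg_le _ _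
  have hβ_val : ∀ g, ip g (atmul Ω (β g)) = F g := by
    intro g
    rw [ip_atmul, hF, ← Finset.sum_add_sum_compl Λ (fun i => β g i * ip (Ω i) g), add_comm]
    congr 1
    · refine Finset.sum_congr rfl fun i hi => ?_
      rw [hβ]; simp only [if_neg (Finset.mem_compl.mp hi)]
    · refine Finset.sum_congr rfl fun i hi => ?_
      rw [hβ]; simp only [if_pos hi]
      exact hsg_mul _
  have hub : ∀ g, ∀ v ∈ subdiffAt (fun z => l1 (amul Ω z)) x, ip g v ≤ F g := by
    intro g v hv
    set T : Finset ℝ :=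
      insert 1 (Λᶜ.image fun i => |amul Ω x i| / (|ip (Ω i) g| + 1)) with hT
    have hTne : T.Nonempty := Finset.insert_nonempty _ _
    set t := T.min' hTne with ht
    have ht_pos : 0 < t := by
      rw [ht, Finset.lt_min'_iff]
      intro y hy
      rw [hT, Finset.mem_insert] at hy
      rcases hy with rfl | hy
      · norm_num
      · obtain ⟨i, hi, rfl⟩ := Finset.mem_image.mp hy
        have hne : amul Ω x i ≠ 0 := fun h => (Finset.mem_compl.mp hi) ((hΛ i).mp h)
        have h0 : 0 < |amul Ω x i| := abs_pos.mpr hne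
        positivity
    have htb : ∀ i ∈ Λᶜ, t * |ip (Ω i) g| < |amul Ω x i| := by
      intro i hi
      have h1 : t ≤ |amul Ω x i| / (|ip (Ω i) g| + 1) :=
        Finset.min'_le _ _ (Finset.mem_insert_of_mem (Finset.mem_image_of_mem _ hi))
      have h2 : (0:ℝ) ≤ |ip (Ω i) g| := abs_nonneg _
      have h3 : t * (|ip (Ω i) g| + 1) ≤ |amul Ω x i| :=
        (le_div_iff₀ (by positivity)).mp h1
      nlinarith
    have hz := hv (x + t • g)
    have hzx : (x + t • g) - x = t • g := by ext j; simp
    rw [hzx, ip_smul_left] at hz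
    have e1 : ∀ i ∈ Λ, |amul Ω (x + t • g) i| = t * |ip (Ω i) g| := by
      intro i hi
      rw [amul_add_smul, (hΛ i).mpr hi, zero_add, abs_mul, abs_of_pos ht_pos]
    have e2 : ∀ i ∈ Λᶜ, |amul Ω (x + t • g) i|
        = |amul Ω x i| + t * (sg (amul Ω x i) * ip (Ω i) g) := by
      intro i hi
      rw [amul_add_smul]
      have hlt := htb i hi
      have habs1 : -(t * |ip (Ω i) g|) ≤ t * ip (Ω i) g := by
        nlinarith [neg_abs_le (ip (Ω i) g)]
      have habs2 : t * ip (Ω i) g ≤ t * |ip (Ω i) g| := by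
        nlinarith [le_abs_self (ip (Ω i) g)]
      by_cases h : 0 ≤ amul Ω x i
      · have hne : amul Ω x i ≠ 0 := fun h0 => (Finset.mem_compl.mp hi) ((hΛ i).mp h0)
        have hpos : 0 < amul Ω x i := lt_of_le_of_ne h (Ne.symm hne)
        rw [abs_of_pos hpos] at hlt
        have hpos2 : 0 < amul Ω x i + t * ip (Ω i) g := by linarith
        rw [abs_of_pos hpos2, abs_of_pos hpos]
        simp only [hsg, if_pos h]
        ring
      · have hneg : amul Ω x i < 0 := lt_of_not_ge h
        rw [abs_of_neg hneg] at hlt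
        have hneg2 : amul Ω x i + t * ip (Ω i) g < 0 := by linarith
        rw [abs_of_neg hneg2, abs_of_neg hneg]
        simp only [hsg, if_neg h]
        ring
    have hfz : l1 (amul Ω (x + t • g)) = l1 (amul Ω x) + t * F g := by
      rw [l1, l1,
        ← Finset.sum_add_sum_compl Λ (fun i => |amul Ω (x + t • g) i|),
        ← Finset.sum_add_sum_compl Λ (fun i => |amul Ω x i|),
        Finset.sum_congr rfl e1, Finset.sum_congr rfl e2,
        Finset.sum_congr rfl (fun i hi => by
          rw [(hΛ i).mpr hi, abs_zero] : ∀ i ∈ Λ, |amul Ω x i| = (0:ℝ)),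
        Finset.sum_const_zero, hF, Finset.sum_add_distrib,
        ← Finset.mul_sum, ← Finset.mul_sum]
      ring
    simp only [] at hz
    rw [hfz] at hz
    have := (mul_le_mul_iff_right₀ ht_pos).mp (by linarith : t * ip g v ≤ t * F g)
    exact this
  have hsup : ∀ g : Fin d → ℝ,
      sSup ((fun w => ip g w) '' subdiffAt (fun z => l1 (amul Ω z)) x) = F g := by
    intro g
    refine IsGreatest.csSup_eq ⟨⟨atmul Ω (β g), hβ_mem g, hβ_val g⟩, ?_⟩
    rintro y ⟨v, hv, rfl⟩
    exact hub g v hv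
  have hint1 : Integrable (fun g : Fin d → ℝ => ∑ i ∈ Λᶜ, sg (amul Ω x i) * ip (Ω i) g)
      (stdGaussian (Fin d)) :=
    integrable_finset_sum _ fun i _ => (integrable_ip (Ω i)).const_mul _
  have hint2 : Integrable (fun g : Fin d → ℝ => ∑ i ∈ Λ, |ip (Ω i) g|)
      (stdGaussian (Fin d)) :=
    integrable_finset_sum _ fun i _ => integrable_abs_ip (Ω i)
  constructor
  · show (∫ g, sSup ((fun w => ip g w) '' subdiffAt (fun z => l1 (amul Ω z)) x)
        ∂stdGaussian (Fin d)) = _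
    rw [integral_congr_ae (Filter.Eventually.of_forall fun g => hsup g)]
    rw [hF, integral_add hint1 hint2,
      integral_finset_sum _ fun i _ => (integrable_ip (Ω i)).const_mul _]
    simp only [integral_const_mul, integral_ip_zero, mul_zero, Finset.sum_const_zero, zero_add]
  · rw [integral_finset_sum _ fun i _ => integrable_abs_ip (Ω i), Finset.mul_sum]
    exact Finset.sum_congr rfl fun i _ => integral_abs_ip (Ω i)

end
end
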